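/- Let q₁ = √(1-α²)·[u; 0] + α·[0; 1] ∈ ℝ^{n+1} be a unit vector with u ∈ ℝ^n, ‖u‖ = 1, and α ∈ (0,1]. Let H be symmetric with ‖H‖ ≤ U_H, g ∈ ℝ^n, δ ≥ 0, and F = [[H, g], [gᵀ, -δ]]. If α·gᵀu ≤ 0 and α ≥ (U_H + δ)/√((U_H+δ)² + 4(gᵀu)²), then q₁ᵀFq₁ ≤ -δ. -/

import Mathlib

/-!
With `s = √(1 - α²)` the Rayleigh quotient is `s² uᵀHu + 2αs gᵀu - δα²`, which is at most
`-δ + ((1 - α²)(U_H + δ) + 2αs gᵀu)` because `uᵀHu ≤ ‖H‖ ≤ U_H`. The bracket is nonpositive: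
trivially when `U_H + δ ≤ 0`, and otherwise because squaring the lower bound on `α` gives
`(1 - α²)(U_H + δ)² ≤ 4α²(gᵀu)²`, which times `1 - α²` is the square of the claim.
-/

open Matrix

/-- The homogenized matrix `F = [[H, g], [gᵀ, -δ]]`. -/
noncomputable def homog {n : ℕ} (H : Matrix (Fin n) (Fin n) ℝ) (g : Fin n → ℝ) (δ : ℝ) :
    Matrix (Fin (n + 1)) (Fin (n + 1)) ℝ :=
  Matrix.of fun i j =>
    if hi : (i : ℕ) < n then
      if hj : (j : ℕ) < n then H ⟨i, hi⟩ ⟨j, hj⟩ else g ⟨i, hi⟩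
    else if hj : (j : ℕ) < n then g ⟨j, hj⟩ else -δ

open scoped RealInnerProductSpace in
theorem dotProduct_mulVec_le_norm_toEuclideanCLM_mul {ι : Type*} [Fintype ι] [DecidableEq ι]
    (A : Matrix ι ι ℝ) (v : ι → ℝ) :
    v ⬝ᵥ A *ᵥ v ≤ ‖toEuclideanCLM (𝕜 := ℝ) A‖ * (v ⬝ᵥ v) := by
  set x : EuclideanSpace ℝ ι := WithLp.toLp 2 v
  have hx : ‖x‖ ^ 2 = v ⬝ᵥ v := by
    rw [← real_inner_self_eq_norm_sq]
    exact dotProduct_comm _ _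
  calc v ⬝ᵥ A *ᵥ v = ⟪x, toEuclideanCLM (𝕜 := ℝ) A x⟫ := (inner_toEuclideanCLM A x x).symm
    _ ≤ ‖x‖ * (‖toEuclideanCLM (𝕜 := ℝ) A‖ * ‖x‖) :=
      (real_inner_le_norm _ _).trans (by gcongr; exact (toEuclideanCLM (𝕜 := ℝ) A).le_opNorm x)
    _ = ‖toEuclideanCLM (𝕜 := ℝ) A‖ * (v ⬝ᵥ v) := by rw [← hx]; ring

theorem snoc_dotProduct_snoc {n : ℕ} (x y : Fin n → ℝ) (a b : ℝ) :
    (Fin.snoc x a : Fin (n + 1) → ℝ) ⬝ᵥ Fin.snoc y b = x ⬝ᵥ y + a * b := by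
  simp [dotProduct, Fin.sum_univ_castSucc]

section homog

variable {n : ℕ} (H : Matrix (Fin n) (Fin n) ℝ) (g : Fin n → ℝ) (δ : ℝ)

@[simp]
theorem homog_castSucc_castSucc (i j : Fin n) :
    homog H g δ i.castSucc j.castSucc = H i j := by
  simp [homog]

@[simp]
theorem homog_castSucc_last (i : Fin n) : homog H g δ i.castSucc (Fin.last n) = g i := by
  simp [homog]

@[simp]
theorem homog_last_castSucc (j : Fin n) : homog H g δ (Fin.last n) j.castSucc = g j := by
  simp [homog]

@[simp]
theorem homog_last_last : homog H g δ (Fin.last n) (Fin.last n) = -δ := by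
  simp [homog]

theorem homog_mulVec_snoc (v : Fin n → ℝ) (a : ℝ) :
    homog H g δ *ᵥ Fin.snoc v a = Fin.snoc (H *ᵥ v + a • g) (g ⬝ᵥ v - δ * a) := by
  ext i
  induction i using Fin.lastCases with
  | last => simp [mulVec, dotProduct, Fin.sum_univ_castSucc]; ring
  | cast i => simp [mulVec, dotProduct, Fin.sum_univ_castSucc, mul_comm]

theorem snoc_dotProduct_homog_mulVec_snoc (v : Fin n → ℝ) (a : ℝ) :
    (Fin.snoc v a : Fin (n + 1) → ℝ) ⬝ᵥ homog H g δ *ᵥ Fin.snoc v a =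
      v ⬝ᵥ H *ᵥ v + 2 * a * (g ⬝ᵥ v) - δ * a ^ 2 := by
  rw [homog_mulVec_snoc, snoc_dotProduct_snoc, dotProduct_add, dotProduct_smul,
    dotProduct_comm v g, smul_eq_mul]
  ring

end homog

theorem neg_one_le_div_sqrt_sq_add (c d : ℝ) (hd : 0 ≤ d) : -1 ≤ c / √(c ^ 2 + d) := by
  rcases (Real.sqrt_nonneg (c ^ 2 + d)).eq_or_lt with h | h
  · simp [← h]
  · rw [le_div_iff₀ h, neg_one_mul, neg_le]
    exact (neg_le_abs c).trans (Real.abs_le_sqrt (by linarith))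

theorem two_mul_mul_sqrt_mul_add_le_zero {α G c : ℝ} (hα : α ^ 2 ≤ 1) (hsign : α * G ≤ 0)
    (hαbig : c / √(c ^ 2 + 4 * G ^ 2) ≤ α) :
    2 * α * √(1 - α ^ 2) * G + (1 - α ^ 2) * c ≤ 0 := by
  have h1 : 0 ≤ 1 - α ^ 2 := by linarith
  have hcross : 2 * α * √(1 - α ^ 2) * G ≤ 0 := by
    nlinarith [mul_nonpos_of_nonneg_of_nonpos (Real.sqrt_nonneg (1 - α ^ 2)) hsign]
  rcases le_or_gt c 0 with hc | hc
  · nlinarith [mul_nonpos_of_nonneg_of_nonpos h1 hc]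
  have hD : 0 < √(c ^ 2 + 4 * G ^ 2) := Real.sqrt_pos.mpr (by positivity)
  have hsq : (1 - α ^ 2) * c ^ 2 ≤ 4 * α ^ 2 * G ^ 2 := by
    have := pow_le_pow_left₀ hc.le ((div_le_iff₀ hD).mp hαbig) 2
    rw [mul_pow, Real.sq_sqrt (by positivity)] at this
    linarith
  have key : ((1 - α ^ 2) * c) ^ 2 ≤ (2 * α * √(1 - α ^ 2) * G) ^ 2 :=
    calc ((1 - α ^ 2) * c) ^ 2 = (1 - α ^ 2) * ((1 - α ^ 2) * c ^ 2) := by ring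
      _ ≤ (1 - α ^ 2) * (4 * α ^ 2 * G ^ 2) := by gcongr
      _ = (2 * α * √(1 - α ^ 2) * G) ^ 2 := by
        rw [mul_pow, mul_pow, mul_pow, Real.sq_sqrt h1]; ring
  have habs := sq_le_sq.mp key
  rw [abs_of_nonneg (by positivity), abs_of_nonpos hcross] at habs
  linarith

theorem skewed_init_rayleigh_bound_general {n : ℕ}
    (H : Matrix (Fin n) (Fin n) ℝ)
    (g u : Fin n → ℝ) (U_H δ α : ℝ)
    (hu : u ⬝ᵥ u = 1) (hα1 : α ≤ 1)
    (hHnorm : ‖Matrix.toEuclideanCLM (𝕜 := ℝ) H‖ ≤ U_H)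
    (hsign : α * (g ⬝ᵥ u) ≤ 0)
    (hαbig : (U_H + δ) / Real.sqrt ((U_H + δ) ^ 2 + 4 * (g ⬝ᵥ u) ^ 2) ≤ α)
    (q₁ : Fin (n + 1) → ℝ)
    (hq₁ : q₁ = Fin.snoc (Real.sqrt (1 - α ^ 2) • u) α) :
    q₁ ⬝ᵥ (homog H g δ *ᵥ q₁) ≤ -δ := by
  have hα : α ^ 2 ≤ 1 := (sq_le_one_iff_abs_le_one α).mpr <|
    abs_le.mpr ⟨(neg_one_le_div_sqrt_sq_add _ _ (by positivity)).trans hαbig, hα1⟩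
  have hquad : u ⬝ᵥ H *ᵥ u ≤ U_H :=
    (dotProduct_mulVec_le_norm_toEuclideanCLM_mul H u).trans (by rw [hu, mul_one]; exact hHnorm)
  have hs : √(1 - α ^ 2) * √(1 - α ^ 2) = 1 - α ^ 2 := Real.mul_self_sqrt (by linarith)
  have hbracket := two_mul_mul_sqrt_mul_add_le_zero hα hsign hαbig
  rw [hq₁, snoc_dotProduct_homog_mulVec_snoc]
  simp only [mulVec_smul, dotProduct_smul, smul_dotProduct, smul_eq_mul]
  rw [← mul_assoc, hs]
  nlinarith [mul_le_mul_of_nonneg_left hquad (by linarith : 0 ≤ 1 - α ^ 2)]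

/-- The skewed initialization `q₁ = √(1-α²)[u;0] + α[0;1]` has Rayleigh quotient
at most `-δ` under the stated conditions on `α`. -/
theorem skewed_init_rayleigh_bound {n : ℕ}
    (H : Matrix (Fin n) (Fin n) ℝ) (hH : H.IsHermitian)
    (g u : Fin n → ℝ) (U_H δ α : ℝ)
    (hu : u ⬝ᵥ u = 1) (hα0 : 0 < α) (hα1 : α ≤ 1)
    (hHnorm : ‖Matrix.toEuclideanCLM (𝕜 := ℝ) H‖ ≤ U_H) (hδ : 0 ≤ δ)
    (hsign : α * (g ⬝ᵥ u) ≤ 0)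
    (hαbig : (U_H + δ) / Real.sqrt ((U_H + δ) ^ 2 + 4 * (g ⬝ᵥ u) ^ 2) ≤ α)
    (q₁ : Fin (n + 1) → ℝ)
    (hq₁ : q₁ = Fin.snoc (Real.sqrt (1 - α ^ 2) • u) α) :
    q₁ ⬝ᵥ (homog H g δ *ᵥ q₁) ≤ -δ :=
  skewed_init_rayleigh_bound_general H g u U_H δ α hu hα1 hHnorm hsign hαbig q₁ hq₁
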